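/- arXiv:1108.6101 — 2 statements merged into one kernel-verified Lean document; each statement's English description precedes it below -/
import Mathlib

section
/- Let (g1, g2) be a matched pair of Lie algebras, i.e. there are linear actions α: g2 ⊗ g1 → g2 (written ζ ◁ X) and β: g2 ⊗ g1 → g1 (written ζ ▷ X) satisfying the four matched-pair compatibility identities. Then the vector space g1 ⊕ g2 with bracket [X ⊕ ζ, Z ⊕ ξ] = ([X,Z] + ζ ▷ Z − ξ ▷ X) ⊕ ([ζ,ξ] + ζ ◁ Z − ξ ◁ X) is a Lie algebra. -/
/-!
After expanding the nested brackets, the `g₁`-component of the Leibniz identity for the double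
crossed sum splits into the Jacobi identity of `g₁` and the two identities describing `▷`
(on `[ζ, ξ] ▷ X` and on `ζ ▷ [X, Y]`); symmetrically, the `g₂`-component splits into the Jacobi
identity of `g₂` and the two identities describing `◁`. Alternation is immediate.
-/

namespace MatchedPair

variable {R L₁ L₂ : Type*} [CommSemiring R] [LieRing L₁] [Module R L₁] [LieRing L₂] [Module R L₂]
  (tl : L₂ →ₗ[R] L₁ →ₗ[R] L₂) (tr : L₂ →ₗ[R] L₁ →ₗ[R] L₁)

def doubleCrossedBracket (a b : L₁ × L₂) : L₁ × L₂ :=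
  (⁅a.1, b.1⁆ + tr a.2 b.1 - tr b.2 a.1, ⁅a.2, b.2⁆ + tl a.2 b.1 - tl b.2 a.1)

local notation "⁅" a ", " b "⁆ₘ" => doubleCrossedBracket tl tr a b

theorem doubleCrossedBracket_self (a : L₁ × L₂) : ⁅a, a⁆ₘ = 0 := by
  simp [doubleCrossedBracket]

theorem fst_doubleCrossedBracket_leibniz
    (h1 : ∀ (ζ ξ : L₂) (X : L₁), tr ⁅ζ, ξ⁆ X = tr ζ (tr ξ X) - tr ξ (tr ζ X))
    (h3 : ∀ (ζ : L₂) (X Y : L₁),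
      tr ζ ⁅X, Y⁆ = ⁅tr ζ X, Y⁆ + ⁅X, tr ζ Y⁆ + tr (tl ζ X) Y - tr (tl ζ Y) X)
    (a b c : L₁ × L₂) :
    ⁅a, ⁅b, c⁆ₘ⁆ₘ.1 = ⁅⁅a, b⁆ₘ, c⁆ₘ.1 + ⁅b, ⁅a, c⁆ₘ⁆ₘ.1 := by
  simp only [doubleCrossedBracket, h1, h3, map_add, map_sub, LinearMap.add_apply,
    LinearMap.sub_apply, lie_add, add_lie, lie_sub, sub_lie, lie_lie, ← lie_skew _ (tr _ _)]
  abel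

theorem snd_doubleCrossedBracket_leibniz
    (h2 : ∀ (ζ : L₂) (X Y : L₁), tl ζ ⁅X, Y⁆ = tl (tl ζ X) Y - tl (tl ζ Y) X)
    (h4 : ∀ (ζ ξ : L₂) (X : L₁),
      tl ⁅ζ, ξ⁆ X = ⁅tl ζ X, ξ⁆ + ⁅ζ, tl ξ X⁆ + tl ζ (tr ξ X) - tl ξ (tr ζ X))
    (a b c : L₁ × L₂) :
    ⁅a, ⁅b, c⁆ₘ⁆ₘ.2 = ⁅⁅a, b⁆ₘ, c⁆ₘ.2 + ⁅b, ⁅a, c⁆ₘ⁆ₘ.2 := by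
  simp only [doubleCrossedBracket, h2, h4, map_add, map_sub, LinearMap.add_apply,
    LinearMap.sub_apply, lie_add, add_lie, lie_sub, sub_lie, lie_lie, ← lie_skew (tl _ _)]
  abel

end MatchedPair

open MatchedPair

theorem double_crossed_sum_is_lie_algebra
    {k : Type} [Field k]
    {g₁ g₂ : Type} [LieRing g₁] [LieAlgebra k g₁] [LieRing g₂] [LieAlgebra k g₂]
    -- the two actions, as bilinear maps
    (tl : g₂ →ₗ[k] g₁ →ₗ[k] g₂)   -- `tl ζ X = ζ ◁ X`
    (tr : g₂ →ₗ[k] g₁ →ₗ[k] g₁)   -- `tr ζ X = ζ ▷ X`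
    -- the four matched pair compatibility identities
    (h1 : ∀ (ζ ξ : g₂) (X : g₁),
      tr ⁅ζ, ξ⁆ X = tr ζ (tr ξ X) - tr ξ (tr ζ X))
    (h2 : ∀ (ζ : g₂) (X Y : g₁),
      tl ζ ⁅X, Y⁆ = tl (tl ζ X) Y - tl (tl ζ Y) X)
    (h3 : ∀ (ζ : g₂) (X Y : g₁),
      tr ζ ⁅X, Y⁆ = ⁅tr ζ X, Y⁆ + ⁅X, tr ζ Y⁆ + tr (tl ζ X) Y - tr (tl ζ Y) X)
    (h4 : ∀ (ζ ξ : g₂) (X : g₁),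
      tl ⁅ζ, ξ⁆ X = ⁅tl ζ X, ξ⁆ + ⁅ζ, tl ξ X⁆ + tl ζ (tr ξ X) - tl ξ (tr ζ X))
    -- the double crossed sum bracket on `g₁ ⊕ g₂`
    (br : (g₁ × g₂) → (g₁ × g₂) → (g₁ × g₂))
    (hbr : ∀ (a b : g₁ × g₂),
      br a b = (⁅a.1, b.1⁆ + tr a.2 b.1 - tr b.2 a.1,
                ⁅a.2, b.2⁆ + tl a.2 b.1 - tl b.2 a.1)) :
    -- `br` is alternating and satisfies the (Leibniz form of the) Jacobi identity,
    -- i.e. `g₁ ⊕ g₂` with this bracket is a Lie algebra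
    (∀ a : g₁ × g₂, br a a = 0) ∧
    (∀ a b c : g₁ × g₂, br a (br b c) = br (br a b) c + br b (br a c)) := by
  obtain rfl : br = doubleCrossedBracket tl tr := funext₂ hbr
  exact ⟨doubleCrossedBracket_self tl tr, fun a b c =>
    Prod.ext (fst_doubleCrossedBracket_leibniz tl tr h1 h3 a b c)
      (snd_doubleCrossedBracket_leibniz tl tr h2 h4 a b c)⟩
end

section
/- Let g be a Lie algebra, M a vector space, and ∇: M → g ⊗ M a linear map (a left g-comodule structure) satisfying the coassociativity condition m[−2] ∧ m[−1] ⊗ m[0] = 0 in (g ∧ g) ⊗ M, where m[−2] ⊗ m[−1] ⊗ m[0] denotes (id ⊗ ∇)∘∇(m). Then such comodule structures on M are in bijective correspondence with module structures over the symmetric algebra S(g*) on M that are 'nilpotent' in the appropriate sense; in particular for a finite-dimensional g with basis X1,…,XN and dual basis θ1,…,θN, the Koszul map m ↦ Σ_i X_i ⊗ m·θ^i defines a left g-comodule structure on M = S(g*). -/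
/-!
Contracting the first leg of `∇` against `θ ∈ g*` gives an operator `ρ θ` on `M`, linear in `θ`,
and `∇ m = Σᵢ Xᵢ ⊗ ρ θⁱ m` recovers `∇` from `ρ`. Contracting the comodule identity against `θ`
and `η` gives `ρ θ ∘ ρ η = ρ η ∘ ρ θ`, because swapping the first two legs swaps the roles of `θ`
and `η`; conversely, commuting operators make the iterated coaction
`Σᵢⱼ Xⱼ ⊗ Xᵢ ⊗ ρ θⁱ (ρ θʲ m)` symmetric in its first two legs. The Koszul map is the case of the
multiplication operators of the commutative algebra `S(g*)`.
-/

open TensorProduct LinearMap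

noncomputable section

/-- Swap the first two legs of `g ⊗ (g ⊗ M)`. -/
def swap12 (k g M : Type) [Field k] [AddCommGroup g] [Module k g]
    [AddCommGroup M] [Module k M] :
    g ⊗[k] (g ⊗[k] M) →ₗ[k] g ⊗[k] (g ⊗[k] M) :=
  (TensorProduct.assoc k g g M).toLinearMap ∘ₗ
    (LinearMap.rTensor M (TensorProduct.comm k g g).toLinearMap) ∘ₗ
      (TensorProduct.assoc k g g M).symm.toLinearMap

/-- `cm` is a left comodule structure over the Lie algebra `g` :
the antisymmetrization `m₍₋₂₎ ∧ m₍₋₁₎ ⊗ m₍₀₎` of the iterated coaction vanishes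
(over a field of characteristic zero this is equivalent to symmetry of the
iterated coaction). -/
def IsLieComodule {k g M : Type} [Field k] [AddCommGroup g] [Module k g]
    [AddCommGroup M] [Module k M] (cm : M →ₗ[k] g ⊗[k] M) : Prop :=
  (swap12 k g M) ∘ₗ (LinearMap.lTensor g cm) ∘ₗ cm = (LinearMap.lTensor g cm) ∘ₗ cm

section

variable {k g M N : Type} [Field k] [AddCommGroup g] [Module k g]
  [AddCommGroup M] [Module k M] [AddCommGroup N] [Module k N]

@[simp] lemma swap12_tmul (x y : g) (m : M) :
    swap12 k g M (x ⊗ₜ[k] (y ⊗ₜ[k] m)) = y ⊗ₜ[k] (x ⊗ₜ[k] m) := by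
  simp [swap12]

variable (k g M) in
def contractLeftLeg : Module.Dual k g →ₗ[k] g ⊗[k] M →ₗ[k] M :=
  llcomp k (g ⊗[k] M) (k ⊗[k] M) M (TensorProduct.lid k M).toLinearMap ∘ₗ rTensorHom M

@[simp] lemma contractLeftLeg_tmul (θ : Module.Dual k g) (x : g) (m : M) :
    contractLeftLeg k g M θ (x ⊗ₜ m) = θ x • m := rfl

lemma contractLeftLeg_comp_lTensor (θ : Module.Dual k g) (f : M →ₗ[k] N) :
    contractLeftLeg k g N θ ∘ₗ f.lTensor g = f ∘ₗ contractLeftLeg k g M θ := by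
  ext x m; simp

lemma contractLeftLeg_comp_contractLeftLeg_swap12 (θ η : Module.Dual k g) :
    contractLeftLeg k g M η ∘ₗ contractLeftLeg k g (g ⊗[k] M) θ ∘ₗ swap12 k g M =
      contractLeftLeg k g M θ ∘ₗ contractLeftLeg k g (g ⊗[k] M) η := by
  ext x y m; simp [smul_comm (θ y)]

lemma sum_tmul_contractLeftLeg_coord {ι : Type} [Fintype ι] (B : Module.Basis ι k g)
    (t : g ⊗[k] M) : ∑ i, B i ⊗ₜ contractLeftLeg k g M (B.coord i) t = t := by
  induction t using TensorProduct.induction_on with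
  | zero => simp
  | tmul x m =>
    simp_rw [contractLeftLeg_tmul, ← smul_tmul, ← sum_tmul, Module.Basis.coord_apply, B.sum_repr]
  | add s t hs ht => simp only [map_add, tmul_add, Finset.sum_add_distrib, hs, ht]

def actionOfCoaction (cm : M →ₗ[k] g ⊗[k] M) : Module.Dual k g →ₗ[k] Module.End k M :=
  lcomp k M cm ∘ₗ contractLeftLeg k g M

@[simp] lemma actionOfCoaction_apply (cm : M →ₗ[k] g ⊗[k] M) (θ : Module.Dual k g) (m : M) :
    actionOfCoaction cm θ m = contractLeftLeg k g M θ (cm m) := rfl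

lemma actionOfCoaction_mul (cm : M →ₗ[k] g ⊗[k] M) (θ η : Module.Dual k g) :
    actionOfCoaction cm θ * actionOfCoaction cm η =
      contractLeftLeg k g M θ ∘ₗ contractLeftLeg k g (g ⊗[k] M) η ∘ₗ cm.lTensor g ∘ₗ cm := by
  ext m
  exact congrArg (contractLeftLeg k g M θ)
    (LinearMap.congr_fun (contractLeftLeg_comp_lTensor η cm) (cm m)).symm

lemma IsLieComodule.commute_actionOfCoaction {cm : M →ₗ[k] g ⊗[k] M} (h : IsLieComodule cm)
    (θ η : Module.Dual k g) : Commute (actionOfCoaction cm θ) (actionOfCoaction cm η) := by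
  rw [commute_iff_eq, actionOfCoaction_mul, actionOfCoaction_mul]
  conv_rhs => rw [← h]
  simp only [← comp_assoc]
  congr 2
  rw [comp_assoc, contractLeftLeg_comp_contractLeftLeg_swap12]

lemma isLieComodule_sum_mk_comp {ι : Type} [Fintype ι] (x : ι → g) (f : ι → Module.End k M)
    (hf : ∀ i j, Commute (f i) (f j)) :
    IsLieComodule (∑ i, TensorProduct.mk k g M (x i) ∘ₗ f i) := by
  ext m
  simp only [comp_apply, LinearMap.sum_apply, mk_apply, map_sum, lTensor_tmul, tmul_sum,
    swap12_tmul]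
  rw [Finset.sum_comm]
  refine Finset.sum_congr rfl fun i _ => Finset.sum_congr rfl fun j _ => ?_
  rw [← Module.End.mul_apply, ← Module.End.mul_apply, hf]

def coactionOfAction {ι : Type} [Fintype ι] (B : Module.Basis ι k g)
    (ρ : Module.Dual k g →ₗ[k] Module.End k M) : M →ₗ[k] g ⊗[k] M :=
  ∑ i, TensorProduct.mk k g M (B i) ∘ₗ ρ (B.coord i)

lemma coactionOfAction_apply {ι : Type} [Fintype ι] (B : Module.Basis ι k g)
    (ρ : Module.Dual k g →ₗ[k] Module.End k M) (m : M) :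
    coactionOfAction B ρ m = ∑ i, B i ⊗ₜ ρ (B.coord i) m := by
  simp [coactionOfAction]

lemma coactionOfAction_actionOfCoaction {ι : Type} [Fintype ι] (B : Module.Basis ι k g)
    (cm : M →ₗ[k] g ⊗[k] M) : coactionOfAction B (actionOfCoaction cm) = cm := by
  ext m
  simp only [coactionOfAction_apply, actionOfCoaction_apply, sum_tmul_contractLeftLeg_coord]

lemma actionOfCoaction_coactionOfAction {ι : Type} [Fintype ι] (B : Module.Basis ι k g)
    (ρ : Module.Dual k g →ₗ[k] Module.End k M) : actionOfCoaction (coactionOfAction B ρ) = ρ := by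
  ext θ m
  simp only [actionOfCoaction_apply, coactionOfAction_apply, map_sum, contractLeftLeg_tmul]
  conv_rhs => rw [← B.sum_dual_apply_smul_coord θ]
  simp only [map_sum, map_smul, LinearMap.sum_apply, LinearMap.smul_apply]

variable (k g M) in
def lieComoduleEquivCommutingActions {ι : Type} [Fintype ι] (B : Module.Basis ι k g) :
    {cm : M →ₗ[k] g ⊗[k] M // IsLieComodule cm} ≃
      {ρ : Module.Dual k g →ₗ[k] Module.End k M // ∀ θ η, Commute (ρ θ) (ρ η)} where
  toFun cm := ⟨actionOfCoaction cm.1, cm.2.commute_actionOfCoaction⟩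
  invFun ρ := ⟨coactionOfAction B ρ.1, isLieComodule_sum_mk_comp _ _ fun _ _ => ρ.2 _ _⟩
  left_inv cm := Subtype.ext (coactionOfAction_actionOfCoaction B cm.1)
  right_inv ρ := Subtype.ext (actionOfCoaction_coactionOfAction B ρ.1)

end

theorem lie_comodules_are_symmetric_algebra_modules_general
    {k : Type} [Field k]
    {g : Type} [LieRing g] [LieAlgebra k g]
    {ι : Type} [Fintype ι] (B : Module.Basis ι k g)
    (M : Type) [AddCommGroup M] [Module k M] :
    -- comodule structures on M over g correspond bijectively to S(g*)-module
    -- structures on M, i.e. to families of commuting operators depending linearly on g*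
    (∃ e : {cm : M →ₗ[k] g ⊗[k] M // IsLieComodule cm} ≃
           {ρ : Module.Dual k g →ₗ[k] Module.End k M //
              ∀ θ η : Module.Dual k g, Commute (ρ θ) (ρ η)},
      ∀ (c : {cm : M →ₗ[k] g ⊗[k] M // IsLieComodule cm}) (m : M),
        (c : M →ₗ[k] g ⊗[k] M) m = ∑ i : ι, B i ⊗ₜ[k] (((e c).1 (B.coord i)) m)) ∧
    -- and the Koszul map `m ↦ Σᵢ Xᵢ ⊗ m·θⁱ` is a comodule structure on `S(g*)`
    IsLieComodule
      (∑ i : ι, (TensorProduct.mk k g (MvPolynomial ι k) (B i)) ∘ₗ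
        (LinearMap.mulRight k (MvPolynomial.X i : MvPolynomial ι k))) := by
  refine ⟨⟨lieComoduleEquivCommutingActions k g M B, fun cm m => ?_⟩,
    isLieComodule_sum_mk_comp _ _ fun i j => ?_⟩
  · rw [← coactionOfAction_apply, lieComoduleEquivCommutingActions,
      Equiv.coe_fn_mk, coactionOfAction_actionOfCoaction]
  · rw [commute_iff_eq, Module.End.mul_eq_comp, Module.End.mul_eq_comp, ← mulRight_mul,
      ← mulRight_mul, mul_comm]

theorem lie_comodules_are_symmetric_algebra_modules
    {k : Type} [Field k] [CharZero k]
    {g : Type} [LieRing g] [LieAlgebra k g]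
    {ι : Type} [Fintype ι] [DecidableEq ι] (B : Module.Basis ι k g)
    (M : Type) [AddCommGroup M] [Module k M] :
    -- comodule structures on M over g correspond bijectively to S(g*)-module
    -- structures on M, i.e. to families of commuting operators depending linearly on g*
    (∃ e : {cm : M →ₗ[k] g ⊗[k] M // IsLieComodule cm} ≃
           {ρ : Module.Dual k g →ₗ[k] Module.End k M //
              ∀ θ η : Module.Dual k g, Commute (ρ θ) (ρ η)},
      ∀ (c : {cm : M →ₗ[k] g ⊗[k] M // IsLieComodule cm}) (m : M),
        (c : M →ₗ[k] g ⊗[k] M) m = ∑ i : ι, B i ⊗ₜ[k] (((e c).1 (B.coord i)) m)) ∧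
    -- and the Koszul map `m ↦ Σᵢ Xᵢ ⊗ m·θⁱ` is a comodule structure on `S(g*)`
    IsLieComodule
      (∑ i : ι, (TensorProduct.mk k g (MvPolynomial ι k) (B i)) ∘ₗ
        (LinearMap.mulRight k (MvPolynomial.X i : MvPolynomial ι k))) :=
  lie_comodules_are_symmetric_algebra_modules_general B M
end
end
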